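/- Let R and S be finite posets with h_R = h_S ≤ 1. Then R ⊑_𝓗 S w.r.t. 𝔇' holds if and only if R ⊑_𝓢 S w.r.t. 𝔇' holds, both for 𝔇' = 𝔗_a and for 𝔇' equal to the class 𝔓 of finite posets. -/

import Mathlib

/-- A finite digraph: a finite nonempty vertex set `V ⊆ ℕ` together with an
arc set `A ⊆ V × V`. -/
structure Dgraph where
  V : Finset ℕ
  nonempty : V.Nonempty
  A : Finset (ℕ × ℕ)
  A_sub : ∀ p ∈ A, p.1 ∈ V ∧ p.2 ∈ V

namespace Dgraph

/-- The set of proper arcs of `G`, i.e. the arc set of `G*`. -/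
def Astar (G : Dgraph) : Finset (ℕ × ℕ) := G.A.filter (fun p => p.1 ≠ p.2)

/-- `G` is reflexive. -/
def IsRefl (G : Dgraph) : Prop := ∀ v ∈ G.V, (v, v) ∈ G.A

/-- `p` is a path in `G` (a nonempty list of pairwise distinct vertices,
consecutive ones joined by arcs).  Its length as a path is `p.length - 1`. -/
def IsPath (G : Dgraph) (p : List ℕ) : Prop :=
  p ≠ [] ∧ p.Nodup ∧ (∀ v ∈ p, v ∈ G.V) ∧ p.Chain' (fun v w => (v, w) ∈ G.A)

/-- `p` is a path in `G*`. -/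
def IsPathStar (G : Dgraph) (p : List ℕ) : Prop :=
  p ≠ [] ∧ p.Nodup ∧ (∀ v ∈ p, v ∈ G.V) ∧ p.Chain' (fun v w => (v, w) ∈ G.A ∧ v ≠ w)

/-- `G*` contains a closed walk. -/
def HasClosedWalkStar (G : Dgraph) : Prop :=
  ∃ p : List ℕ, (∀ v ∈ p, v ∈ G.V) ∧ p.Chain' (fun v w => (v, w) ∈ G.A ∧ v ≠ w) ∧
    2 ≤ p.length ∧ p.head? = p.getLast?

/-- membership in the class `𝔗ₐ`: `G*` is acyclic. -/
def MemTa (G : Dgraph) : Prop := ¬ G.HasClosedWalkStar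

/-- The height of `G`: the maximal length of a path in `G`. -/
noncomputable def height (G : Dgraph) : ℕ :=
  sSup {n | ∃ p, G.IsPath p ∧ p.length = n + 1}

/-- The interval `[v,w]_G`. -/
def interval (G : Dgraph) (v w : ℕ) : Finset ℕ :=
  G.V.filter (fun z => (v, z) ∈ G.A ∧ (z, w) ∈ G.A)

/-- `ι(v,w)_G`, the cardinality of the interval `[v,w]_G`. -/
def iota (G : Dgraph) (v w : ℕ) : ℕ := (G.interval v w).card

/-- The set `𝓗(G,H)` of homomorphisms from `G` to `H` (represented as total
maps `ℕ → ℕ`, normalized to `0` outside of `V(G)`). -/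
def Hom (G H : Dgraph) : Set (ℕ → ℕ) :=
  {f | (∀ v ∈ G.V, f v ∈ H.V) ∧ (∀ p ∈ G.A, (f p.1, f p.2) ∈ H.A) ∧
    ∀ v, v ∉ G.V → f v = 0}

/-- The set `𝓢(G,H)` of strict homomorphisms from `G` to `H`. -/
def SHom (G H : Dgraph) : Set (ℕ → ℕ) :=
  {f ∈ Hom G H | ∀ p ∈ G.Astar, f p.1 ≠ f p.2}

/-- `μ_ξ(G)`, for a homomorphism `ξ` from `G` into `H`. -/
def mu (G H : Dgraph) (f : ℕ → ℕ) : ℕ :=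
  ∑ p ∈ G.Astar, H.iota (f p.1) (f p.2)

/-- `L` is a subgraph of `G`. -/
def Subgraph (L G : Dgraph) : Prop := L.V ⊆ G.V ∧ L.A ⊆ G.A

/-- Restriction of a map to a vertex set (normalized to `0` outside). -/
def restrict (X : Finset ℕ) (f : ℕ → ℕ) : ℕ → ℕ := fun x => if x ∈ X then f x else 0

/-- `𝓜(L,H)`: homomorphisms from `L` to `H` with maximal `μ`. -/
def MSet (L H : Dgraph) : Set (ℕ → ℕ) :=
  {f ∈ Hom L H | ∀ g ∈ Hom L H, mu L H g ≤ mu L H f}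

/-- `𝓜^𝓛(G,H)`. -/
def MLSet (G H : Dgraph) (𝓛 : Set Dgraph) : Set (ℕ → ℕ) :=
  {f ∈ Hom G H | ∀ L ∈ 𝓛, restrict L.V f ∈ MSet L H}

/-- `𝓙^𝓛_{G,H'}(ξ)` for `ξ ∈ 𝓗(G,H)`. -/
def JSet (G H H' : Dgraph) (𝓛 : Set Dgraph) (ξ : ℕ → ℕ) : Set (ℕ → ℕ) :=
  {ζ ∈ Hom G H' | ∀ L ∈ 𝓛, ∀ p ∈ L.Astar,
    H'.iota (ζ p.1) (ζ p.2) = H.iota (ξ p.1) (ξ p.2)}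

/-- The digraph `P_×` of a path `P = P_0, …, P_ℓ`: vertex set `{P_0,…,P_ℓ}`
and arcs `P_{i-1}P_i`. -/
def pathGraph (P : List ℕ) (h : P ≠ []) : Dgraph where
  V := P.toFinset
  nonempty := by
    obtain ⟨a, t, rfl⟩ := List.exists_cons_of_ne_nil h
    exact ⟨a, by simp⟩
  A := (P.zip P.tail).toFinset
  A_sub := by
    intro p hp
    rw [List.mem_toFinset] at hp
    have h1 := List.of_mem_zip hp
    exact ⟨List.mem_toFinset.mpr h1.1, List.mem_toFinset.mpr (List.mem_of_mem_tail h1.2)⟩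

/-- `𝓛(G)`: the set of the digraphs `P_×` for the paths `P` of length `h_G` in `G`. -/
def LSet (G : Dgraph) : Set Dgraph :=
  {D | ∃ (P : List ℕ) (h : P ≠ []), G.IsPath P ∧ P.length = G.height + 1 ∧
    D = pathGraph P h}

/-- The class `𝕽`: reflexive digraphs `R ∈ 𝔗ₐ` with
`𝓜^{𝓛(R)}(R,R) ∩ 𝓢(R,R) ≠ ∅`. -/
def MemR (R : Dgraph) : Prop :=
  R.MemTa ∧ R.IsRefl ∧ (MLSet R R (LSet R) ∩ SHom R R).Nonempty

/-- `G` is a poset: reflexive, antisymmetric and transitive. -/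
def IsPoset (G : Dgraph) : Prop :=
  G.IsRefl ∧ (∀ v w, (v, w) ∈ G.A → (w, v) ∈ G.A → v = w) ∧
    (∀ u v w, (u, v) ∈ G.A → (v, w) ∈ G.A → (u, w) ∈ G.A)

/-- The class `𝔗ₐ^{=n}`: digraphs in `𝔗ₐ` of height `n` in which every vertex
lies on a path of length `n`. -/
def MemTaEq (n : ℕ) (G : Dgraph) : Prop :=
  G.MemTa ∧ G.height = n ∧ ∀ v ∈ G.V, ∃ p, G.IsPath p ∧ p.length = n + 1 ∧ v ∈ p

/-- A maximal path in `G`: no path in `G` properly contains its vertex set. -/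
def MaximalPath (G : Dgraph) (P : List ℕ) : Prop :=
  G.IsPath P ∧ ∀ Q, G.IsPath Q → (∀ v ∈ P, v ∈ Q) → ∀ v ∈ Q, v ∈ P

end Dgraph

open Dgraph

/-
A homomorphism `ξ : G → R` factors uniquely, through the quotient of `G` by the equivalence
generated by the arcs that `ξ` collapses, as a strict homomorphism of that quotient.  A quotient
with a closed walk has no strict homomorphism into a poset, and for acyclic `H` the strict
homomorphisms into a poset are those of the reflexive-transitive closure of `H`, itself a poset.
Summing over quotients, `⊑_𝓢` implies `⊑_𝓗` on both classes.

Conversely, add `k` new vertices between the ends of every proper arc of `G`; this keeps `G` in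
`𝔗ₐ`, resp. in `𝔓`.  In a poset `R` of height at most `1` the interval spanned by an arc `ab` has
one element if `a = b` and two otherwise, so `#𝓗(G_k, R) = ∑_ξ (2 ^ k) ^ s(ξ)`, where `s(ξ)` counts
the proper arcs of `G` that `ξ` does not collapse.  The strict homomorphisms are the `ξ` with
`s(ξ) = #A(G*)`, the top exponent, and comparing top coefficients for large `k` gives the converse.
-/

open Finset in
/-- For `x = 2 ^ k > #t` the terms of the right-hand side below `x ^ m` sum to less than `x ^ m`,
so the multiplicities of the top power `x ^ m` compare. -/
lemma card_filter_eq_le_of_sum_pow_le {α β : Type*} (s : Finset α) (t : Finset β)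
    (f : α → ℕ) (g : β → ℕ) {m : ℕ} (hg : ∀ b ∈ t, g b ≤ m)
    (h : ∀ k, ∑ a ∈ s, (2 ^ k) ^ f a ≤ ∑ b ∈ t, (2 ^ k) ^ g b) :
    #{a ∈ s | f a = m} ≤ #{b ∈ t | g b = m} := by
  set x := 2 ^ #t
  have hx : #t < x := Nat.lt_two_pow_self
  have hlower : ∑ b ∈ t with g b ≠ m, x ^ g b < x ^ m := by
    have hterm : ∀ b ∈ t.filter (g · ≠ m), x ^ g b * x ≤ x ^ m := fun b hb => by
      obtain ⟨hb, hne⟩ := mem_filter.mp hb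
      rw [← pow_succ]
      exact Nat.pow_le_pow_right (by omega) (by have := hg b hb; omega)
    have : (∑ b ∈ t with g b ≠ m, x ^ g b) * x < x ^ m * x :=
      calc (∑ b ∈ t with g b ≠ m, x ^ g b) * x
          ≤ #(t.filter (g · ≠ m)) * x ^ m := by
            rw [sum_mul]
            exact sum_le_card_nsmul _ _ _ hterm
        _ ≤ #t * x ^ m := Nat.mul_le_mul_right _ (card_filter_le _ _)
        _ < x ^ m * x := by rw [mul_comm]; exact Nat.mul_lt_mul_of_pos_left hx (by positivity)
    exact Nat.lt_of_mul_lt_mul_right this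
  have : #{a ∈ s | f a = m} * x ^ m < (#{b ∈ t | g b = m} + 1) * x ^ m :=
    calc #{a ∈ s | f a = m} * x ^ m
        = ∑ a ∈ s with f a = m, x ^ f a := by
          rw [sum_congr rfl fun a ha => by rw [(mem_filter.mp ha).2], sum_const, smul_eq_mul]
      _ ≤ ∑ a ∈ s, x ^ f a := sum_le_sum_of_subset (filter_subset _ _)
      _ ≤ ∑ b ∈ t, x ^ g b := h _
      _ = ∑ b ∈ t with g b = m, x ^ g b + ∑ b ∈ t with g b ≠ m, x ^ g b :=
        (sum_filter_add_sum_filter_not _ _ _).symm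
      _ < (#{b ∈ t | g b = m} + 1) * x ^ m := by
        rw [sum_congr rfl fun b hb => by rw [(mem_filter.mp hb).2], sum_const, smul_eq_mul]
        linarith
  exact Nat.lt_succ_iff.mp (Nat.lt_of_mul_lt_mul_right this)

namespace Dgraph

open Finset Relation

open scoped Classical

variable {G H L R S : Dgraph} {f c c' q ζ ξ : ℕ → ℕ} {a b u v w x y z i k : ℕ} {e : ℕ × ℕ}
  {p : List ℕ}

def Adj (G : Dgraph) (u v : ℕ) : Prop := (u, v) ∈ G.A

def ProperAdj (G : Dgraph) (u v : ℕ) : Prop := (u, v) ∈ G.Astar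

lemma properAdj_iff : G.ProperAdj u v ↔ (u, v) ∈ G.A ∧ u ≠ v := mem_filter

lemma ProperAdj.adj (h : G.ProperAdj u v) : G.Adj u v := (properAdj_iff.mp h).1

lemma ProperAdj.ne (h : G.ProperAdj u v) : u ≠ v := (properAdj_iff.mp h).2

lemma Adj.fst_mem (h : G.Adj u v) : u ∈ G.V := (G.A_sub _ h).1

lemma Adj.snd_mem (h : G.Adj u v) : v ∈ G.V := (G.A_sub _ h).2

namespace IsPoset

lemma refl_mem (hR : R.IsPoset) (ha : a ∈ R.V) : (a, a) ∈ R.A := hR.1 a ha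

lemma antisymm (hR : R.IsPoset) (hab : (a, b) ∈ R.A) (hba : (b, a) ∈ R.A) : a = b :=
  hR.2.1 a b hab hba

lemma trans {a b c : ℕ} (hR : R.IsPoset) (hab : (a, b) ∈ R.A) (hbc : (b, c) ∈ R.A) :
    (a, c) ∈ R.A :=
  hR.2.2 a b c hab hbc

lemma transGen_properAdj (hR : R.IsPoset) (h : TransGen R.ProperAdj a b) : R.ProperAdj a b := by
  induction h with
  | single hab => exact hab
  | tail _ hbc ih =>
    rw [properAdj_iff] at ih hbc ⊢
    refine ⟨hR.trans ih.1 hbc.1, fun hac => ih.2 ?_⟩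
    subst hac
    exact hR.antisymm ih.1 hbc.1

end IsPoset

lemma hasClosedWalkStar_iff : G.HasClosedWalkStar ↔ ∃ u, TransGen G.ProperAdj u u := by
  constructor
  · rintro ⟨p, -, hchain, hlen, hcl⟩
    obtain ⟨u, w, l, rfl⟩ : ∃ u w l, p = u :: w :: l := by
      match p, hlen with
      | u :: w :: l, _ => exact ⟨u, w, l, rfl⟩
    replace hchain : List.IsChain G.ProperAdj (u :: w :: l) :=
      List.IsChain.imp (fun _ _ h => properAdj_iff.mpr h) hchain
    have hlast : (w :: l).getLast (List.cons_ne_nil _ _) = u := by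
      simpa [List.getLast?_eq_some_getLast] using hcl.symm
    exact ⟨u, TransGen.head' (List.isChain_cons_cons.mp hchain).1
      (List.relationReflTransGen_of_exists_isChain_cons l
        (List.isChain_cons_cons.mp hchain).2 hlast)⟩
  · rintro ⟨u, hu⟩
    obtain ⟨w, huw, hwu⟩ := TransGen.head'_iff.mp hu
    obtain ⟨l, hchain, hlast⟩ := List.exists_isChain_cons_of_relationReflTransGen hwu
    have hchain' : List.IsChain G.ProperAdj (u :: w :: l) := hchain.cons_cons huw
    refine ⟨u :: w :: l, ?_, ?_, by simp, ?_⟩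
    · exact hchain'.induction _ _ (fun _ _ h _ => h.adj.snd_mem) (fun _ => huw.adj.fst_mem)
    · exact hchain'.imp (fun _ _ h => properAdj_iff.mp h)
    · simp [List.getLast?_eq_some_getLast, hlast]

lemma memTa_iff : G.MemTa ↔ ∀ u, ¬ TransGen G.ProperAdj u u := by
  simp [MemTa, hasClosedWalkStar_iff]

lemma IsPoset.memTa (hR : R.IsPoset) : R.MemTa :=
  memTa_iff.mpr fun _ h => (hR.transGen_properAdj h).ne rfl

lemma MemTa.of_subgraph (hLG : L.Subgraph G) (hG : G.MemTa) : L.MemTa :=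
  memTa_iff.mpr fun u h => memTa_iff.mp hG u <|
    TransGen.mono (fun _ _ hab => filter_subset_filter _ hLG.2 hab) _ _ h

lemma properAdj_of_mem_sHom (hf : f ∈ SHom G H) (h : G.ProperAdj u v) :
    H.ProperAdj (f u) (f v) :=
  properAdj_iff.mpr ⟨hf.1.2.1 _ h.adj, hf.2 _ h⟩

lemma MemTa.of_mem_sHom (hf : f ∈ SHom G H) (hH : H.MemTa) : G.MemTa :=
  memTa_iff.mpr fun u h => memTa_iff.mp hH (f u) <|
    h.lift f fun _ _ => properAdj_of_mem_sHom hf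

lemma sHom_eq_empty_of_not_memTa (hR : R.IsPoset) (hG : ¬ G.MemTa) : SHom G R = ∅ :=
  Set.eq_empty_of_forall_notMem fun _ hf => hG (hR.memTa.of_mem_sHom hf)

noncomputable def rtClosure (G : Dgraph) : Dgraph where
  V := G.V
  nonempty := G.nonempty
  A := (G.V ×ˢ G.V).filter fun p => ReflTransGen G.Adj p.1 p.2
  A_sub _ hp := mem_product.mp (mem_filter.mp hp).1

lemma mem_rtClosure_A :
    (u, v) ∈ G.rtClosure.A ↔ u ∈ G.V ∧ v ∈ G.V ∧ ReflTransGen G.Adj u v := by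
  simp [rtClosure, and_assoc]

lemma subgraph_rtClosure : G.Subgraph G.rtClosure :=
  ⟨subset_rfl, fun ⟨_, _⟩ h => mem_rtClosure_A.mpr
    ⟨Adj.fst_mem h, Adj.snd_mem h, .single h⟩⟩

lemma reflTransGen_properAdj_of_reflTransGen_adj (h : ReflTransGen G.Adj u v) :
    ReflTransGen G.ProperAdj u v := by
  refine reflTransGen_closed (fun a b hab => ?_) _ _ h
  by_cases hab' : a = b
  · exact hab' ▸ .refl
  · exact .single (properAdj_iff.mpr ⟨hab, hab'⟩)

lemma transGen_properAdj_of_reflTransGen_adj (h : ReflTransGen G.Adj u v) (hne : u ≠ v) :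
    TransGen G.ProperAdj u v :=
  (reflTransGen_iff_eq_or_transGen.mp (reflTransGen_properAdj_of_reflTransGen_adj h)).resolve_left
    hne.symm

lemma MemTa.isPoset_rtClosure (hG : G.MemTa) : G.rtClosure.IsPoset := by
  refine ⟨fun v hv => mem_rtClosure_A.mpr ⟨hv, hv, .refl⟩, fun u v huv hvu => ?_,
    fun u v w huv hvw => ?_⟩
  · rw [mem_rtClosure_A] at huv hvu
    by_contra hne
    exact memTa_iff.mp hG u <|
      (transGen_properAdj_of_reflTransGen_adj huv.2.2 hne).trans_left
        (reflTransGen_properAdj_of_reflTransGen_adj hvu.2.2)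
  · rw [mem_rtClosure_A] at huv hvw ⊢
    exact ⟨huv.1, hvw.2.1, huv.2.2.trans hvw.2.2⟩

lemma sHom_rtClosure (hR : R.IsPoset) : SHom G.rtClosure R = SHom G R := by
  ext f
  refine ⟨fun ⟨⟨hV, hA, hz⟩, hs⟩ => ⟨⟨hV, fun p hp => hA p (subgraph_rtClosure.2 hp), hz⟩,
    fun p hp => hs p (filter_subset_filter _ subgraph_rtClosure.2 hp)⟩, fun hf => ?_⟩
  have hA : ∀ p ∈ G.rtClosure.A,
      (f p.1, f p.2) ∈ R.A ∧ (p.1 ≠ p.2 → f p.1 ≠ f p.2) := by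
    rintro ⟨u, v⟩ hp
    obtain ⟨hu, -, huv⟩ := mem_rtClosure_A.mp hp
    by_cases hne : u = v
    · exact ⟨hne ▸ hR.refl_mem (hf.1.1 u hu), fun h => absurd hne h⟩
    · have := hR.transGen_properAdj <|
        (transGen_properAdj_of_reflTransGen_adj huv hne).lift f fun _ _ =>
          properAdj_of_mem_sHom hf
      exact properAdj_iff.mp this |>.imp_right fun h _ => h
  exact ⟨⟨hf.1.1, fun p hp => (hA p hp).1, hf.1.2.2⟩,
    fun p hp => (hA p (filter_subset _ _ hp)).2 (mem_filter.mp hp).2⟩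

lemma finite_setOf_mapsTo_of_eq_zero (V W : Finset ℕ) :
    {f : ℕ → ℕ | (∀ v ∈ V, f v ∈ W) ∧ ∀ v ∉ V, f v = 0}.Finite := by
  refine Set.Finite.of_finite_image (f := fun f (v : V) => f v) ?_ fun f hf g hg hfg => ?_
  · refine (Set.Finite.pi' fun _ => W.finite_toSet).subset ?_
    rintro _ ⟨f, hf, rfl⟩ v
    exact hf.1 v v.2
  · funext v
    by_cases hv : v ∈ V
    · exact congrFun hfg ⟨v, hv⟩
    · rw [hf.2 v hv, hg.2 v hv]

lemma hom_finite (G R : Dgraph) : (Hom G R).Finite :=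
  (finite_setOf_mapsTo_of_eq_zero G.V R.V).subset fun _ hf => ⟨hf.1, hf.2.2⟩

noncomputable def homFinset (G R : Dgraph) : Finset (ℕ → ℕ) := (hom_finite G R).toFinset

@[simp]
lemma mem_homFinset : ξ ∈ homFinset G R ↔ ξ ∈ Hom G R := Set.Finite.mem_toFinset _

lemma ncard_hom_eq_card_homFinset (G R : Dgraph) : (Hom G R).ncard = (homFinset G R).card :=
  Set.ncard_eq_toFinset_card _ _

def CollapsedAdj (G : Dgraph) (c : ℕ → ℕ) (u w : ℕ) : Prop := G.Adj u w ∧ c u = c w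

noncomputable def kernelClass (G : Dgraph) (c : ℕ → ℕ) (v : ℕ) : Finset ℕ :=
  G.V.filter (EqvGen (G.CollapsedAdj c) v)

lemma mem_kernelClass_self (hv : v ∈ G.V) : v ∈ G.kernelClass c v :=
  mem_filter.mpr ⟨hv, .refl v⟩

noncomputable def kernelMap (G : Dgraph) (c : ℕ → ℕ) (v : ℕ) : ℕ :=
  if hv : v ∈ G.V then (G.kernelClass c v).min' ⟨v, mem_kernelClass_self hv⟩ else 0

lemma kernelMap_of_notMem (hv : v ∉ G.V) : G.kernelMap c v = 0 := dif_neg hv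

lemma kernelMap_spec (hv : v ∈ G.V) :
    G.kernelMap c v ∈ G.V ∧ EqvGen (G.CollapsedAdj c) v (G.kernelMap c v) := by
  rw [kernelMap, dif_pos hv]
  exact mem_filter.mp (min'_mem _ _)

lemma kernelMap_eq_kernelMap_iff (hu : u ∈ G.V) (hw : w ∈ G.V) :
    G.kernelMap c u = G.kernelMap c w ↔ EqvGen (G.CollapsedAdj c) u w := by
  constructor
  · intro h
    exact ((kernelMap_spec hu).2.trans _ _ _ (h ▸ (kernelMap_spec hw).2.symm))
  · intro h
    have hclass : G.kernelClass c u = G.kernelClass c w := by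
      ext x
      simp only [kernelClass, mem_filter]
      exact and_congr_right fun _ => ⟨h.symm.trans _ _ _, h.trans _ _ _⟩
    simp only [kernelMap, dif_pos hu, dif_pos hw, hclass]

lemma apply_kernelMap (hv : v ∈ G.V) : c (G.kernelMap c v) = c v := by
  have key : ∀ {a b}, EqvGen (G.CollapsedAdj c) a b → c a = c b := by
    intro a b h
    induction h with
    | rel _ _ hab => exact hab.2
    | refl => rfl
    | symm _ _ _ ih => exact ih.symm
    | trans _ _ _ _ _ ih₁ ih₂ => exact ih₁.trans ih₂
  exact (key (kernelMap_spec hv).2).symm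

lemma kernelMap_congr (h : EqvGen (G.CollapsedAdj c) = EqvGen (G.CollapsedAdj c')) :
    G.kernelMap c = G.kernelMap c' := by
  have hclass : G.kernelClass c = G.kernelClass c' := by
    funext v
    simp only [kernelClass, h]
  unfold kernelMap
  simp only [hclass]

lemma kernelMap_kernelMap : G.kernelMap (G.kernelMap c) = G.kernelMap c := by
  refine kernelMap_congr (le_antisymm (fun a b hab => ?_) (EqvGen.mono fun a b hab => ?_))
  · refine (EqvGen.is_equivalence _).eqvGen_iff.mp (EqvGen.mono (fun a b hab => ?_) a b hab)
    exact (kernelMap_eq_kernelMap_iff hab.1.fst_mem hab.1.snd_mem).mp hab.2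
  · exact ⟨hab.1, (kernelMap_eq_kernelMap_iff hab.1.fst_mem hab.1.snd_mem).mpr (.rel _ _ hab)⟩

noncomputable def map (G : Dgraph) (q : ℕ → ℕ) : Dgraph where
  V := G.V.image q
  nonempty := G.nonempty.image q
  A := G.A.image fun p => (q p.1, q p.2)
  A_sub p hp := by
    obtain ⟨e, he, rfl⟩ := mem_image.mp hp
    exact ⟨mem_image_of_mem q (G.A_sub e he).1, mem_image_of_mem q (G.A_sub e he).2⟩

lemma restrict_comp_mem_hom (hζ : ζ ∈ Hom (G.map q) R) :
    restrict G.V (ζ ∘ q) ∈ Hom G R := by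
  refine ⟨fun v hv => ?_, fun p hp => ?_, fun v hv => if_neg hv⟩
  · rw [restrict, if_pos hv]
    exact hζ.1 _ (mem_image_of_mem q hv)
  · rw [restrict, restrict, if_pos (G.A_sub p hp).1, if_pos (G.A_sub p hp).2]
    exact hζ.2.1 _ (mem_image_of_mem _ hp)

lemma injOn_restrict_comp : Set.InjOn (fun ζ => restrict G.V (ζ ∘ q)) (Hom (G.map q) R) := by
  intro ζ₁ h₁ ζ₂ h₂ h
  funext x
  by_cases hx : x ∈ (G.map q).V
  · obtain ⟨v, hv, rfl⟩ := mem_image.mp hx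
    simpa [restrict, hv] using congrFun h v
  · rw [h₁.2.2 x hx, h₂.2.2 x hx]

lemma kernelMap_restrict_comp (hζ : ζ ∈ SHom (G.map (G.kernelMap c)) R) :
    G.kernelMap (restrict G.V (ζ ∘ G.kernelMap c)) = G.kernelMap c := by
  set q := G.kernelMap c
  suffices G.CollapsedAdj (restrict G.V (ζ ∘ q)) = G.CollapsedAdj q by
    rw [kernelMap_congr (congrArg Relation.EqvGen this), kernelMap_kernelMap]
  funext a b
  refine propext (and_congr_right fun hab => ?_)
  rw [restrict, restrict, if_pos hab.fst_mem, if_pos hab.snd_mem]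
  refine ⟨fun h => by_contra fun hne => hζ.2 (q a, q b) ?_ h, congrArg ζ⟩
  exact properAdj_iff.mpr ⟨mem_image_of_mem _ hab, hne⟩

lemma image_restrict_comp_sHom_map :
    (fun ζ => restrict G.V (ζ ∘ G.kernelMap c)) '' SHom (G.map (G.kernelMap c)) R =
      {ξ ∈ Hom G R | G.kernelMap ξ = G.kernelMap c} := by
  set q := G.kernelMap c
  ext ξ
  constructor
  · rintro ⟨ζ, hζ, rfl⟩
    exact ⟨restrict_comp_mem_hom hζ.1, kernelMap_restrict_comp hζ⟩
  rintro ⟨hξ, hq⟩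
  have hξq : ∀ v ∈ G.V, restrict (G.map q).V ξ (q v) = ξ v := fun v hv => by
    rw [restrict, if_pos (show q v ∈ (G.map q).V from mem_image_of_mem q hv), ← hq,
      apply_kernelMap (c := ξ) hv]
  have hA : ∀ p ∈ (G.map q).A, ∃ e ∈ G.A, p = (q e.1, q e.2) := fun p hp => by
    obtain ⟨e, he, rfl⟩ := mem_image.mp hp
    exact ⟨e, he, rfl⟩
  refine ⟨restrict (G.map q).V ξ, ⟨⟨fun x hx => ?_, fun p hp => ?_, fun x hx => if_neg hx⟩,
    fun p hp => ?_⟩, ?_⟩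
  · obtain ⟨v, hv, rfl⟩ := mem_image.mp hx
    exact hξq v hv ▸ hξ.1 v hv
  · obtain ⟨e, he, rfl⟩ := hA p hp
    rw [hξq _ (G.A_sub e he).1, hξq _ (G.A_sub e he).2]
    exact hξ.2.1 e he
  · obtain ⟨hp, hne⟩ := mem_filter.mp hp
    obtain ⟨e, he, rfl⟩ := hA p hp
    rw [hξq _ (G.A_sub e he).1, hξq _ (G.A_sub e he).2]
    intro hξe
    rw [← hq] at hne
    exact hne ((kernelMap_eq_kernelMap_iff (G.A_sub e he).1 (G.A_sub e he).2).mpr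
      (.rel _ _ ⟨he, hξe⟩))
  · show restrict G.V (restrict (G.map q).V ξ ∘ q) = ξ
    funext v
    by_cases hv : v ∈ G.V
    · rw [restrict, if_pos hv, Function.comp_apply, hξq v hv]
    · rw [restrict, if_neg hv, hξ.2.2 v hv]

lemma finite_range_kernelMap (G : Dgraph) : (Set.range G.kernelMap).Finite :=
  (finite_setOf_mapsTo_of_eq_zero G.V G.V).subset <| by
    rintro _ ⟨c, rfl⟩
    exact ⟨fun v hv => (kernelMap_spec hv).1, fun v hv => kernelMap_of_notMem hv⟩

noncomputable def kernelMaps (G : Dgraph) : Finset (ℕ → ℕ) :=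
  G.finite_range_kernelMap.toFinset

lemma ncard_hom_eq_sum (G R : Dgraph) :
    (Hom G R).ncard = ∑ q ∈ G.kernelMaps, (SHom (G.map q) R).ncard := by
  rw [ncard_hom_eq_card_homFinset, card_eq_sum_card_fiberwise (f := G.kernelMap)
    (t := G.kernelMaps) fun ξ _ => by simp [kernelMaps]]
  refine sum_congr rfl fun q hq => ?_
  obtain ⟨c, rfl⟩ : q ∈ Set.range G.kernelMap := by simpa [kernelMaps] using hq
  rw [← (injOn_restrict_comp.mono fun _ h => h.1).ncard_image, image_restrict_comp_sHom_map,
    ← Set.ncard_coe_finset]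
  simp

lemma ncard_hom_le_of_ncard_sHom_le (hR : R.IsPoset) (hS : S.IsPoset)
    (h : ∀ H : Dgraph, H.MemTa → (SHom H R).ncard ≤ (SHom H S).ncard) (G : Dgraph) :
    (Hom G R).ncard ≤ (Hom G S).ncard := by
  rw [ncard_hom_eq_sum, ncard_hom_eq_sum]
  refine sum_le_sum fun q _ => ?_
  by_cases hq : (G.map q).MemTa
  · exact h _ hq
  · rw [sHom_eq_empty_of_not_memTa hR hq, sHom_eq_empty_of_not_memTa hS hq]

lemma IsPath.length_le_card (hp : G.IsPath p) : p.length ≤ G.V.card := by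
  rw [← List.toFinset_card_of_nodup hp.2.1]
  exact card_le_card fun x hx => hp.2.2.1 x (List.mem_toFinset.mp hx)

lemma IsPath.length_le_height (hp : G.IsPath p) : p.length ≤ G.height + 1 := by
  have hbdd : BddAbove {n | ∃ p, G.IsPath p ∧ p.length = n + 1} := by
    refine ⟨G.V.card, ?_⟩
    rintro n ⟨p, hp, hn⟩
    have := hp.length_le_card
    omega
  have hpos := List.length_pos_iff.mpr hp.1
  have := le_csSup hbdd ⟨p, hp, (Nat.sub_add_cancel hpos).symm⟩
  unfold height
  omega

lemma IsPoset.interval_eq_pair (hR : R.IsPoset) (hle : R.height ≤ 1) (hab : (a, b) ∈ R.A) :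
    R.interval a b = {a, b} := by
  have ha := (R.A_sub _ hab).1
  have hb := (R.A_sub _ hab).2
  ext z
  simp only [interval, mem_filter, mem_insert, mem_singleton]
  constructor
  · rintro ⟨hz, haz, hzb⟩
    by_contra! hne
    have hba : a ≠ b := fun h => hne.1 (hR.antisymm (h ▸ hzb) haz)
    have hpath : R.IsPath [a, z, b] := by
      refine ⟨List.cons_ne_nil _ _, by simp [hne.1.symm, hne.2, hba], by simp [ha, hz, hb], ?_⟩
      exact .cons_cons haz (.cons_cons hzb (.singleton _))
    have := hpath.length_le_height
    simp only [List.length_cons, List.length_nil] at this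
    omega
  · rintro (rfl | rfl)
    · exact ⟨ha, hR.refl_mem ha, hab⟩
    · exact ⟨hb, hab, hR.refl_mem hb⟩

lemma IsPoset.iota_eq (hR : R.IsPoset) (hle : R.height ≤ 1) (hab : (a, b) ∈ R.A) :
    R.iota a b = if a = b then 1 else 2 := by
  rw [iota, hR.interval_eq_pair hle hab]
  split_ifs with h
  · simp [h]
  · exact card_pair h

noncomputable def freshBase (G : Dgraph) : ℕ := G.V.max' G.nonempty + 1

noncomputable def freshVertex (G : Dgraph) (e : ℕ × ℕ) (i : ℕ) : ℕ :=
  G.freshBase + Nat.pair (Nat.pair e.1 e.2) i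

noncomputable def freshVertices (G : Dgraph) (k : ℕ) : Finset ℕ :=
  (G.Astar ×ˢ Finset.range k).image fun p => G.freshVertex p.1 p.2

/-- `lower` and `upper` decode the arc `e` from `G.freshVertex e i`; a vertex of `G` is its own
lower and upper end. -/
noncomputable def lower (G : Dgraph) (x : ℕ) : ℕ :=
  if x ∈ G.V then x else (Nat.unpair (Nat.unpair (x - G.freshBase)).1).1

noncomputable def upper (G : Dgraph) (x : ℕ) : ℕ :=
  if x ∈ G.V then x else (Nat.unpair (Nat.unpair (x - G.freshBase)).1).2

/-- `G` with `k` new vertices placed between the ends of each proper arc. -/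
noncomputable def addMidpoints (G : Dgraph) (k : ℕ) : Dgraph where
  V := G.V ∪ G.freshVertices k
  nonempty := G.nonempty.mono subset_union_left
  A := ((G.V ∪ G.freshVertices k) ×ˢ (G.V ∪ G.freshVertices k)).filter
    fun p => p.1 = p.2 ∨ ReflGen G.Adj (G.upper p.1) (G.lower p.2)
  A_sub _ hp := mem_product.mp (mem_filter.mp hp).1

lemma freshVertex_notMem : G.freshVertex e i ∉ G.V := fun h => by
  have := G.V.le_max' _ h
  unfold freshVertex freshBase at this
  omega

lemma freshVertex_injective :
    Function.Injective fun p : (ℕ × ℕ) × ℕ => G.freshVertex p.1 p.2 := by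
  rintro ⟨⟨a, b⟩, i⟩ ⟨⟨a', b'⟩, i'⟩ h
  simpa [freshVertex, Nat.pair_eq_pair, and_assoc] using h

lemma lower_of_mem (hx : x ∈ G.V) : G.lower x = x := if_pos hx

lemma upper_of_mem (hx : x ∈ G.V) : G.upper x = x := if_pos hx

@[simp]
lemma lower_freshVertex : G.lower (G.freshVertex e i) = e.1 := by
  rw [lower, if_neg freshVertex_notMem, freshVertex]
  simp

@[simp]
lemma upper_freshVertex : G.upper (G.freshVertex e i) = e.2 := by
  rw [upper, if_neg freshVertex_notMem, freshVertex]
  simp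

lemma mem_freshVertices :
    z ∈ G.freshVertices k ↔ ∃ e ∈ G.Astar, ∃ i < k, G.freshVertex e i = z := by
  simp [freshVertices, and_assoc]

lemma notMem_freshVertices (hv : v ∈ G.V) : v ∉ G.freshVertices k := fun hv' => by
  obtain ⟨e, -, i, -, rfl⟩ := mem_freshVertices.mp hv'
  exact freshVertex_notMem hv

lemma properAdj_lower_upper (hz : z ∈ G.freshVertices k) :
    G.ProperAdj (G.lower z) (G.upper z) := by
  obtain ⟨e, he, i, -, rfl⟩ := mem_freshVertices.mp hz
  rw [lower_freshVertex, upper_freshVertex]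
  exact he

lemma lower_mem_and_upper_mem (hx : x ∈ (G.addMidpoints k).V) :
    G.lower x ∈ G.V ∧ G.upper x ∈ G.V := by
  rcases mem_union.mp hx with hx | hx
  · rw [lower_of_mem hx, upper_of_mem hx]
    exact ⟨hx, hx⟩
  · have := properAdj_lower_upper hx
    exact ⟨this.adj.fst_mem, this.adj.snd_mem⟩

lemma mem_V_of_lower_eq_upper (hx : x ∈ (G.addMidpoints k).V) (h : G.lower x = G.upper x) :
    x ∈ G.V :=
  (mem_union.mp hx).resolve_right fun hx => (properAdj_lower_upper hx).ne h

lemma mem_addMidpoints_A : (x, y) ∈ (G.addMidpoints k).A ↔ x ∈ (G.addMidpoints k).V ∧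
    y ∈ (G.addMidpoints k).V ∧ (x = y ∨ ReflGen G.Adj (G.upper x) (G.lower y)) := by
  simp only [addMidpoints, mem_filter, mem_product, and_assoc]

lemma subgraph_addMidpoints : G.Subgraph (G.addMidpoints k) := by
  refine ⟨subset_union_left, fun ⟨u, v⟩ h => mem_addMidpoints_A.mpr ?_⟩
  have hu : u ∈ G.V := (G.A_sub _ h).1
  have hv : v ∈ G.V := (G.A_sub _ h).2
  refine ⟨mem_union_left _ hu, mem_union_left _ hv, .inr ?_⟩
  rw [upper_of_mem hu, lower_of_mem hv]
  exact .single h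

lemma subgraph_addMidpoints_rtClosure :
    (G.addMidpoints k).Subgraph (G.rtClosure.addMidpoints k) := by
  have hV : (G.addMidpoints k).V ⊆ (G.rtClosure.addMidpoints k).V :=
    union_subset_union subset_rfl <| image_subset_image <|
      product_subset_product_left <| filter_subset_filter _ subgraph_rtClosure.2
  refine ⟨hV, fun ⟨x, y⟩ h => ?_⟩
  obtain ⟨hx, hy, h⟩ := mem_addMidpoints_A.mp h
  exact mem_addMidpoints_A.mpr
    ⟨hV hx, hV hy, h.imp_right (ReflGen.mono (fun _ _ h => subgraph_rtClosure.2 h) _ _)⟩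

namespace IsPoset

lemma mem_A_of_reflGen (hG : G.IsPoset) (ha : a ∈ G.V) (h : ReflGen G.Adj a b) :
    (a, b) ∈ G.A := by
  cases h with
  | refl => exact hG.refl_mem ha
  | single h => exact h

lemma lower_upper_mem_A (hG : G.IsPoset) (hx : x ∈ (G.addMidpoints k).V) :
    (G.lower x, G.upper x) ∈ G.A := by
  rcases mem_union.mp hx with hx | hx
  · rw [lower_of_mem hx, upper_of_mem hx]
    exact hG.refl_mem hx
  · exact (properAdj_lower_upper hx).adj

lemma upper_lower_mem_A (hG : G.IsPoset) (hxy : (x, y) ∈ (G.addMidpoints k).A) (hne : x ≠ y) :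
    (G.upper x, G.lower y) ∈ G.A := by
  obtain ⟨hx, -, h⟩ := mem_addMidpoints_A.mp hxy
  exact hG.mem_A_of_reflGen (lower_mem_and_upper_mem hx).2 (h.resolve_left hne)

lemma addMidpoints (hG : G.IsPoset) (k : ℕ) : (G.addMidpoints k).IsPoset := by
  refine ⟨fun x hx => mem_addMidpoints_A.mpr ⟨hx, hx, .inl rfl⟩, fun x y hxy hyx => ?_,
    fun x y w hxy hyw => ?_⟩
  · by_contra hne
    have h₁ := hG.upper_lower_mem_A hxy hne
    have h₂ := hG.upper_lower_mem_A hyx (Ne.symm hne)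
    have hx := hG.lower_upper_mem_A ((G.addMidpoints k).A_sub _ hxy).1
    have hy := hG.lower_upper_mem_A ((G.addMidpoints k).A_sub _ hxy).2
    -- `upper x ≤ lower y ≤ upper y ≤ lower x ≤ upper x`, so `x` and `y` are old vertices
    have hxV := mem_V_of_lower_eq_upper ((G.addMidpoints k).A_sub _ hxy).1 <|
      hG.antisymm hx (hG.trans (hG.trans h₁ hy) h₂)
    have hyV := mem_V_of_lower_eq_upper ((G.addMidpoints k).A_sub _ hxy).2 <|
      hG.antisymm hy (hG.trans (hG.trans h₂ hx) h₁)
    rw [upper_of_mem hxV, lower_of_mem hyV] at h₁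
    rw [upper_of_mem hyV, lower_of_mem hxV] at h₂
    exact hne (hG.antisymm h₁ h₂)
  · obtain ⟨hx, -, -⟩ := mem_addMidpoints_A.mp hxy
    obtain ⟨-, hw, -⟩ := mem_addMidpoints_A.mp hyw
    refine mem_addMidpoints_A.mpr ⟨hx, hw, ?_⟩
    by_cases hxy' : x = y
    · exact hxy' ▸ (mem_addMidpoints_A.mp hyw).2.2
    by_cases hyw' : y = w
    · exact hyw' ▸ (mem_addMidpoints_A.mp hxy).2.2
    refine .inr (.single (hG.trans (hG.trans (hG.upper_lower_mem_A hxy hxy') ?_)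
      (hG.upper_lower_mem_A hyw hyw')))
    exact hG.lower_upper_mem_A ((G.addMidpoints k).A_sub _ hxy).2

end IsPoset

lemma MemTa.addMidpoints (hG : G.MemTa) (k : ℕ) : (G.addMidpoints k).MemTa :=
  ((hG.isPoset_rtClosure.addMidpoints k).memTa).of_subgraph subgraph_addMidpoints_rtClosure

lemma ncard_setOf_forall_mem_eq_prod (Z : Finset ℕ) (T : ℕ → Finset ℕ) (ξ : ℕ → ℕ) :
    {f : ℕ → ℕ | (∀ z ∈ Z, f z ∈ T z) ∧ ∀ v ∉ Z, f v = ξ v}.ncard = ∏ z ∈ Z, #(T z) := by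
  have himg : {f : ℕ → ℕ | (∀ z ∈ Z, f z ∈ T z) ∧ ∀ v ∉ Z, f v = ξ v} =
      (fun (σ : ∀ a ∈ Z, ℕ) v => if h : v ∈ Z then σ v h else ξ v) '' ↑(Z.pi T) := by
    ext f
    constructor
    · rintro ⟨hZ, hξ⟩
      refine ⟨fun v _ => f v, mem_pi.mpr hZ, funext fun v => ?_⟩
      by_cases hv : v ∈ Z
      · simp [hv]
      · simp [hv, hξ v hv]
    · rintro ⟨σ, hσ, rfl⟩
      exact ⟨fun z hz => by simpa [hz] using mem_pi.mp hσ z hz, fun v hv => by simp [hv]⟩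
  rw [himg, Set.InjOn.ncard_image, Set.ncard_coe_finset, card_pi]
  intro σ₁ _ σ₂ _ h
  funext v hv
  simpa [hv] using congrFun h v

lemma restrict_mem_hom_of_subgraph (hLG : L.Subgraph G) (hf : f ∈ Hom G R) :
    restrict L.V f ∈ Hom L R := by
  refine ⟨fun v hv => ?_, fun p hp => ?_, fun v hv => if_neg hv⟩
  · rw [restrict, if_pos hv]
    exact hf.1 v (hLG.1 hv)
  · rw [restrict, restrict, if_pos (L.A_sub p hp).1, if_pos (L.A_sub p hp).2]
    exact hf.2.1 p (hLG.2 hp)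

lemma setOf_mem_hom_addMidpoints_restrict_eq (hR : R.IsPoset) (hξ : ξ ∈ Hom G R) :
    {f ∈ Hom (G.addMidpoints k) R | restrict G.V f = ξ} =
      {f | (∀ z ∈ G.freshVertices k, f z ∈ R.interval (ξ (G.lower z)) (ξ (G.upper z))) ∧
        ∀ v ∉ G.freshVertices k, f v = ξ v} := by
  ext f
  constructor
  · rintro ⟨hf, rfl⟩
    refine ⟨fun z hz => ?_, fun v hv => ?_⟩
    · obtain ⟨e, he, i, -, rfl⟩ := mem_freshVertices.mp hz
      have he₁ := (properAdj_lower_upper hz).adj.fst_mem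
      have he₂ := (properAdj_lower_upper hz).adj.snd_mem
      simp only [lower_freshVertex, upper_freshVertex] at he₁ he₂ ⊢
      have hzV : G.freshVertex e i ∈ (G.addMidpoints k).V := mem_union_right _ hz
      have harc₁ : (e.1, G.freshVertex e i) ∈ (G.addMidpoints k).A := by
        refine mem_addMidpoints_A.mpr ⟨mem_union_left _ he₁, hzV, .inr ?_⟩
        rw [upper_of_mem he₁, lower_freshVertex]
      have harc₂ : (G.freshVertex e i, e.2) ∈ (G.addMidpoints k).A := by
        refine mem_addMidpoints_A.mpr ⟨hzV, mem_union_left _ he₂, .inr ?_⟩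
        rw [upper_freshVertex, lower_of_mem he₂]
      rw [interval, mem_filter, restrict, restrict, if_pos he₁, if_pos he₂]
      exact ⟨hf.1 _ hzV, hf.2.1 _ harc₁, hf.2.1 _ harc₂⟩
    · rw [restrict]
      split_ifs with hvV
      · rfl
      · exact hf.2.2 v (by simp [addMidpoints, hvV, hv])
  · rintro ⟨hZ, hrest⟩
    have hfV : ∀ v ∈ G.V, f v = ξ v := fun v hv => hrest v (notMem_freshVertices hv)
    have hbounds : ∀ x ∈ (G.addMidpoints k).V,
        f x ∈ R.V ∧ (ξ (G.lower x), f x) ∈ R.A ∧ (f x, ξ (G.upper x)) ∈ R.A := by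
      intro x hx
      rcases mem_union.mp hx with hx | hx
      · rw [hfV x hx, lower_of_mem hx, upper_of_mem hx]
        have := hξ.1 x hx
        exact ⟨this, hR.refl_mem this, hR.refl_mem this⟩
      · exact mem_filter.mp (hZ x hx)
    refine ⟨⟨fun x hx => (hbounds x hx).1, fun ⟨x, y⟩ hxy => ?_, fun v hv => ?_⟩, ?_⟩
    · obtain ⟨hx, hy, rfl | h⟩ := mem_addMidpoints_A.mp hxy
      · exact hR.refl_mem (hbounds x hx).1
      have hmid : (ξ (G.upper x), ξ (G.lower y)) ∈ R.A := by
        rcases (Relation.reflGen_iff _ _ _).mp h with h | h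
        · exact h ▸ hR.refl_mem (hξ.1 _ (lower_mem_and_upper_mem hy).1)
        · exact hξ.2.1 _ h
      exact hR.trans (hR.trans (hbounds x hx).2.2 hmid) (hbounds y hy).2.1
    · have hv' : v ∉ G.V ∧ v ∉ G.freshVertices k := by simpa [addMidpoints] using hv
      rw [hrest v hv'.2, hξ.2.2 v hv'.1]
    · funext v
      rw [restrict]
      split_ifs with hv
      · exact hfV v hv
      · exact (hξ.2.2 v hv).symm

lemma ncard_hom_addMidpoints (hR : R.IsPoset) (G : Dgraph) (k : ℕ) :
    (Hom (G.addMidpoints k) R).ncard =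
      ∑ ξ ∈ homFinset G R, ∏ e ∈ G.Astar, R.iota (ξ e.1) (ξ e.2) ^ k := by
  rw [ncard_hom_eq_card_homFinset, card_eq_sum_card_fiberwise (f := restrict G.V)
    (t := homFinset G R) fun f hf => by
      simpa using restrict_mem_hom_of_subgraph subgraph_addMidpoints (mem_homFinset.mp hf)]
  refine sum_congr rfl fun ξ hξ => ?_
  have hfiber : (↑{f ∈ homFinset (G.addMidpoints k) R | restrict G.V f = ξ} : Set (ℕ → ℕ)) =
      {f ∈ Hom (G.addMidpoints k) R | restrict G.V f = ξ} := by
    ext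
    simp
  rw [← Set.ncard_coe_finset, hfiber, setOf_mem_hom_addMidpoints_restrict_eq hR
    (mem_homFinset.mp hξ), ncard_setOf_forall_mem_eq_prod, freshVertices,
    prod_image (freshVertex_injective.injOn), prod_product]
  simp [iota]

noncomputable def strictArcCount (G : Dgraph) (ξ : ℕ → ℕ) : ℕ :=
  #{e ∈ G.Astar | ξ e.1 ≠ ξ e.2}

lemma strictArcCount_le : G.strictArcCount ξ ≤ #G.Astar := card_filter_le _ _

lemma ncard_sHom_eq (G R : Dgraph) :
    (SHom G R).ncard = #{ξ ∈ homFinset G R | G.strictArcCount ξ = #G.Astar} := by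
  rw [← Set.ncard_coe_finset]
  congr 1
  ext ξ
  simp [SHom, strictArcCount, card_filter_eq_iff]

lemma IsPoset.prod_iota_pow (hR : R.IsPoset) (hle : R.height ≤ 1) (hξ : ξ ∈ Hom G R) (k : ℕ) :
    ∏ e ∈ G.Astar, R.iota (ξ e.1) (ξ e.2) ^ k = (2 ^ k) ^ G.strictArcCount ξ := by
  rw [strictArcCount, ← prod_const, prod_filter]
  refine prod_congr rfl fun e he => ?_
  rw [hR.iota_eq hle (hξ.2.1 _ (mem_filter.mp he).1)]
  split_ifs <;> simp_all

lemma ncard_sHom_le_of_ncard_hom_addMidpoints_le (hR : R.IsPoset) (hS : S.IsPoset)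
    (hleR : R.height ≤ 1) (hleS : S.height ≤ 1)
    (h : ∀ k, (Hom (G.addMidpoints k) R).ncard ≤ (Hom (G.addMidpoints k) S).ncard) :
    (SHom G R).ncard ≤ (SHom G S).ncard := by
  rw [ncard_sHom_eq, ncard_sHom_eq]
  refine card_filter_eq_le_of_sum_pow_le _ _ _ _ (fun _ _ => strictArcCount_le) fun k => ?_
  have := h k
  rwa [ncard_hom_addMidpoints hR, ncard_hom_addMidpoints hS,
    sum_congr rfl fun ξ hξ => hR.prod_iota_pow hleR (mem_homFinset.mp hξ) k,
    sum_congr rfl fun ξ hξ => hS.prod_iota_pow hleS (mem_homFinset.mp hξ) k] at this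

end Dgraph

theorem stmt_2 (R S : Dgraph) (hR : R.IsPoset) (hS : S.IsPoset)
    (hEq : R.height = S.height) (hle : R.height ≤ 1) :
    ((∀ G : Dgraph, G.MemTa → (Hom G R).ncard ≤ (Hom G S).ncard) ↔
      (∀ G : Dgraph, G.MemTa → (SHom G R).ncard ≤ (SHom G S).ncard)) ∧
    ((∀ G : Dgraph, G.IsPoset → (Hom G R).ncard ≤ (Hom G S).ncard) ↔
      (∀ G : Dgraph, G.IsPoset → (SHom G R).ncard ≤ (SHom G S).ncard)) := by
  have hleS : S.height ≤ 1 := hEq ▸ hle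
  refine ⟨⟨fun h G hG => ?_, fun h G _ => ?_⟩, ⟨fun h G hG => ?_, fun h G _ => ?_⟩⟩
  · exact ncard_sHom_le_of_ncard_hom_addMidpoints_le hR hS hle hleS
      fun k => h _ (hG.addMidpoints k)
  · exact ncard_hom_le_of_ncard_sHom_le hR hS h G
  · exact ncard_sHom_le_of_ncard_hom_addMidpoints_le hR hS hle hleS
      fun k => h _ (hG.addMidpoints k)
  · refine ncard_hom_le_of_ncard_sHom_le hR hS (fun H hH => ?_) G
    rw [← sHom_rtClosure hR, ← sHom_rtClosure hS]
    exact h _ hH.isPoset_rtClosure
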